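/- Existence and uniqueness of the lexicographically optimal vector: in the polymatroid polyhedron A there exists a lex-optimal vector, and it is unique. -/

import Mathlib

open Finset
open scoped Classical

noncomputable section

namespace SharingEcon

variable {V : Type*} [Fintype V] [DecidableEq V]

/-- The set of neighbors of a set of nodes: `N_S = ⋃ i ∈ S, N_i`. -/
def nbrs (G : SimpleGraph V) [DecidableRel G.Adj] (S : Finset V) : Finset V :=
  S.biUnion fun i => G.neighborFinset i

/-- The set function `f(S) = ∑_{j ∈ N_S} D_j`. -/
def fS (G : SimpleGraph V) [DecidableRel G.Adj] (D : V → ℝ) (S : Finset V) : ℝ :=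
  ∑ j ∈ nbrs G S, D j

/-- The polymatroid polyhedron `A` of a set function `f`. -/
def polyA (f : Finset V → ℝ) : Set (V → ℝ) :=
  {r | (∀ i, 0 ≤ r i) ∧ ∀ S : Finset V, ∑ i ∈ S, r i ≤ f S}

/-- The base `A₀` of the polymatroid. -/
def polyBase (f : Finset V → ℝ) : Set (V → ℝ) :=
  {r | r ∈ polyA f ∧ ∑ i, r i = f Finset.univ}

/-- The coordinates of a vector sorted in nondecreasing order. -/
def sortedVec (x : V → ℝ) : List ℝ :=
  (Finset.univ.val.map x).sort (· ≤ ·)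

/-- `x` is lexicographically at least `y` (comparing sorted coordinate vectors). -/
def lexGE (x y : V → ℝ) : Prop :=
  sortedVec x = sortedVec y ∨
    ∃ k : ℕ, (∀ j < k, (sortedVec x).getD j 0 = (sortedVec y).getD j 0) ∧
      (sortedVec y).getD k 0 < (sortedVec x).getD k 0

/-- `r` is lexicographically optimal in `A` for the sharing-ratio vectors `(r i / D i)`. -/
def LexOptimal (A : Set (V → ℝ)) (D : V → ℝ) (r : V → ℝ) : Prop :=
  r ∈ A ∧ ∀ r' ∈ A, lexGE (fun i => r i / D i) (fun i => r' i / D i)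

/-- The sharing ratio of node `i`. -/
def ratio (D r : V → ℝ) (i : V) : ℝ := r i / D i

/-- The distinct values of the sharing ratios, sorted increasingly. -/
def vals (D r : V → ℝ) : List ℝ :=
  (Finset.univ.image (ratio D r)).sort (· ≤ ·)

/-- The number `K(r)` of distinct sharing-ratio values. -/
def numLevels (D r : V → ℝ) : ℕ := (vals D r).length

/-- The `k`-th smallest distinct ratio value `v_k(r)` (1-indexed). -/
def v (D r : V → ℝ) (k : ℕ) : ℝ := (vals D r).getD (k - 1) 0

/-- The `k`-th level set `L_k(r)` (1-indexed). -/
def level (D r : V → ℝ) (k : ℕ) : Finset V :=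
  Finset.univ.filter fun i => ratio D r i = v D r k

end SharingEcon
namespace SharingEcon

set_option linter.unusedSectionVars false
set_option linter.unusedVariables false

section Aux
variable {V : Type*} [Fintype V] [DecidableEq V]

private lemma sort_append_of_le (c s : Multiset ℝ)
    (h : ∀ a ∈ c, ∀ b ∈ s, a ≤ b) :
    (c + s).sort (· ≤ ·) = c.sort (· ≤ ·) ++ s.sort (· ≤ ·) := by
  apply fun h1 h2 h3 => List.Perm.eq_of_pairwise' (r := (· ≤ · : ℝ → ℝ → Prop)) h2 h3 h1
  · rw [← Multiset.coe_eq_coe, ← Multiset.coe_add, Multiset.sort_eq, Multiset.sort_eq,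
      Multiset.sort_eq]
  · exact Multiset.pairwise_sort _ _
  · rw [List.pairwise_append]
    refine ⟨Multiset.pairwise_sort _ _, Multiset.pairwise_sort _ _, ?_⟩
    intro a ha b hb
    exact h a (by rwa [← Multiset.mem_sort (· ≤ ·)]) b (by rwa [← Multiset.mem_sort (· ≤ ·)])

private lemma univ_val_map_split (S : Finset V) (x : V → ℝ) :
    Finset.univ.val.map x = S.val.map x + Sᶜ.val.map x := by
  rw [← Multiset.map_add]
  congr 1
  have : S.disjUnion Sᶜ (disjoint_compl_right) = Finset.univ := by
    ext i; simp [Finset.mem_disjUnion]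
  rw [← this]; rfl


private lemma sorted_head_le (l : List ℝ) (hl : l.Pairwise (· ≤ ·)) (a : ℝ) (ha : a ∈ l) :
    l.getD 0 0 ≤ a := by
  cases l with
  | nil => simp at ha
  | cons b t =>
    rcases List.mem_cons.1 ha with rfl | ha
    · simp
    · simpa using (List.rel_of_pairwise_cons hl ha).trans (le_refl a)

private lemma mem_of_getD_zero (l : List ℝ) (hl : l ≠ []) : l.getD 0 0 ∈ l := by
  cases l with
  | nil => simp at hl
  | cons b t => simp

private lemma sortedVec_split (x : V → ℝ) (S : Finset V)
    (hle : ∀ i ∈ S, ∀ j ∉ S, x i ≤ x j) :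
    sortedVec (V := V) x = (S.val.map x).sort (· ≤ ·) ++ (Sᶜ.val.map x).sort (· ≤ ·) := by
  rw [sortedVec, univ_val_map_split S x]
  apply sort_append_of_le
  intro a ha b hb
  obtain ⟨i, hi, rfl⟩ := Multiset.mem_map.1 ha
  obtain ⟨j, hj, rfl⟩ := Multiset.mem_map.1 hb
  exact hle i hi j (by simpa using hj)

omit [Fintype V] [DecidableEq V] in
private lemma length_sort_map (S : Finset V) (x : V → ℝ) :
    ((S.val.map x).sort (· ≤ ·)).length = S.card := by
  rw [Multiset.length_sort, Multiset.card_map]; rfl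

/-- The key lexicographic win lemma. -/
private lemma lex_win (x y : V → ℝ) (S : Finset V)
    (h1 : ∀ i ∈ S, x i = y i)
    (hxx : ∀ i ∈ S, ∀ j ∉ S, x i ≤ x j)
    (hxy : ∀ i ∈ S, ∀ j ∉ S, x i ≤ y j)
    (j₀ : V) (hj₀ : j₀ ∉ S)
    (hlt : ∀ j ∉ S, y j₀ < x j)
    (hmin : ∀ j ∉ S, y j₀ ≤ y j) :
    ∃ k : ℕ, (∀ j < k, (sortedVec x).getD j 0 = (sortedVec y).getD j 0) ∧
      (sortedVec y).getD k 0 < (sortedVec x).getD k 0 := by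
  have hy_split : sortedVec (V := V) y
      = (S.val.map y).sort (· ≤ ·) ++ (Sᶜ.val.map y).sort (· ≤ ·) := by
    apply sortedVec_split
    intro i hi j hj
    rw [← h1 i hi]; exact hxy i hi j hj
  have hx_split := sortedVec_split x S hxx
  have hmapeq : S.val.map y = S.val.map x := Multiset.map_congr rfl (fun i hi => (h1 i hi).symm)
  rw [hmapeq] at hy_split
  have hlenx := length_sort_map S x
  refine ⟨S.card, ?_, ?_⟩
  · intro j hj
    rw [hx_split, hy_split, List.getD_append _ _ _ _ (by rw [hlenx]; exact hj),
      List.getD_append _ _ _ _ (by rw [hlenx]; exact hj)]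
  · rw [hx_split, hy_split, List.getD_append_right _ _ _ _ (le_of_eq hlenx),
      List.getD_append_right _ _ _ _ (le_of_eq hlenx), hlenx, Nat.sub_self]
    have hj₀c : j₀ ∈ Sᶜ.val := by simpa using hj₀
    have hymem : y j₀ ∈ (Sᶜ.val.map y).sort (· ≤ ·) := by
      rw [Multiset.mem_sort]; exact Multiset.mem_map_of_mem y hj₀c
    have hxne : (Sᶜ.val.map x).sort (· ≤ ·) ≠ [] := by
      intro h
      have : x j₀ ∈ (Sᶜ.val.map x).sort (· ≤ ·) := by
        rw [Multiset.mem_sort]; exact Multiset.mem_map_of_mem x hj₀c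
      rw [h] at this; simp at this
    have h2 : ((Sᶜ.val.map x).sort (· ≤ ·)).getD 0 0 ∈ (Sᶜ.val.map x).sort (· ≤ ·) :=
      mem_of_getD_zero _ hxne
    rw [Multiset.mem_sort] at h2
    obtain ⟨j, hj, hjx⟩ := Multiset.mem_map.1 h2
    have hjS : j ∉ S := by simpa using hj
    calc ((Sᶜ.val.map y).sort (· ≤ ·)).getD 0 0 ≤ y j₀ :=
          sorted_head_le _ (Multiset.pairwise_sort _ _) _ hymem
      _ < x j := hlt j hjS
      _ = _ := hjx


private def Tight (f : Finset V → ℝ) (r : V → ℝ) (T : Finset V) : Prop :=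
  ∑ i ∈ T, r i = f T

private lemma tight_inter_union {f : Finset V → ℝ}
    (hsub : ∀ S T : Finset V, f (S ∩ T) + f (S ∪ T) ≤ f S + f T)
    {r : V → ℝ} (hr : r ∈ polyA f) {S T : Finset V}
    (hS : Tight f r S) (hT : Tight f r T) :
    Tight f r (S ∩ T) ∧ Tight f r (S ∪ T) := by
  have h1 : ∑ i ∈ S ∪ T, r i + ∑ i ∈ S ∩ T, r i = ∑ i ∈ S, r i + ∑ i ∈ T, r i :=
    Finset.sum_union_inter
  have h2 := hr.2 (S ∩ T)
  have h3 := hr.2 (S ∪ T)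
  have h4 := hsub S T
  constructor <;> (unfold Tight; unfold Tight at hS hT; linarith)

private lemma tight_inf {f : Finset V → ℝ}
    (hsub : ∀ S T : Finset V, f (S ∩ T) + f (S ∪ T) ≤ f S + f T)
    {r : V → ℝ} (hr : r ∈ polyA f) (B : Finset V) (hB : Tight f r B)
    (X : Finset V) (g : V → Finset V) (hg : ∀ j ∈ X, Tight f r (g j)) :
    Tight f r (B ∩ X.inf g) := by
  induction X using Finset.induction_on with
  | empty => simpa using hB
  | @insert a Xs hx ih =>
    rw [Finset.inf_insert]
    have h1 : Tight f r (B ∩ Xs.inf g) := ih (fun j hj => hg j (Finset.mem_insert_of_mem hj))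
    have h2 : Tight f r (g a) := hg a (Finset.mem_insert_self a Xs)
    have := (tight_inter_union hsub hr h1 h2).1
    have heq : B ∩ Xs.inf g ∩ g a = B ∩ (g a ⊓ Xs.inf g) := by
      ext i; simp [Finset.mem_inter]; tauto
    rwa [heq] at this

private lemma tight_sup {f : Finset V → ℝ} (hf0 : f ∅ = 0)
    (hsub : ∀ S T : Finset V, f (S ∩ T) + f (S ∪ T) ≤ f S + f T)
    {r : V → ℝ} (hr : r ∈ polyA f)
    (X : Finset V) (g : V → Finset V) (hg : ∀ j ∈ X, Tight f r (g j)) :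
    Tight f r (X.sup g) := by
  induction X using Finset.induction_on with
  | empty => simp [Tight, hf0]
  | @insert a Xs hx ih =>
    rw [Finset.sup_insert]
    have h1 : Tight f r (Xs.sup g) := ih (fun j hj => hg j (Finset.mem_insert_of_mem hj))
    have h2 : Tight f r (g a) := hg a (Finset.mem_insert_self a Xs)
    exact (tight_inter_union hsub hr h2 h1).2


private lemma sum_shift (T : Finset V) (rs : V → ℝ) (i : V) (ε : ℝ) :
    ∑ l ∈ T, (rs l + (if l = i then ε else 0)) = ∑ l ∈ T, rs l + (if i ∈ T then ε else 0) := by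
  rw [Finset.sum_add_distrib, Finset.sum_ite_eq' T i (fun _ => ε)]

private lemma sum_diff_single (i : V) (g : V → ℝ) (h : ∀ l, l ≠ i → g l = 0) :
    ∑ l, g l = g i := by
  rw [← Finset.sum_subset (Finset.subset_univ {i}) (fun x _ hx => h x (by simpa using hx))]
  simp

/-- If not every tight-set family covers `i`, we can increase coordinate `i`. -/
private lemma exists_tight_mem {f : Finset V → ℝ} {D : V → ℝ} (hD : ∀ i, 0 < D i)
    {M : ℝ} {rs : V → ℝ} (hrs : rs ∈ polyA f)
    (hM : ∀ i, rs i < M * D i)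
    (hmin : IsMinOn (fun r => ∑ l, (r l - M * D l)^2 / D l) (polyA f) rs) (i : V) :
    ∃ T : Finset V, i ∈ T ∧ Tight f rs T := by
  by_contra hcon
  push_neg at hcon
  have hslack : ∀ T : Finset V, i ∈ T → 0 < f T - ∑ l ∈ T, rs l := by
    intro T hiT
    have h1 := hrs.2 T
    have hne := hcon T hiT
    unfold Tight at hne
    rcases lt_or_eq_of_le h1 with h | h
    · linarith
    · exact absurd h hne
  classical
  set F : Finset (Finset V) := Finset.univ.filter (fun T => i ∈ T) with hF
  have hFne : F.Nonempty := ⟨{i}, by simp [hF]⟩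
  have himgne : (F.image (fun T => f T - ∑ l ∈ T, rs l)).Nonempty := hFne.image _
  set δ := (F.image (fun T => f T - ∑ l ∈ T, rs l)).min' himgne with hδ
  have hδpos : 0 < δ := by
    obtain ⟨T, hT, hTe⟩ := Finset.mem_image.1 ((F.image _).min'_mem himgne)
    rw [hδ, ← hTe]
    exact hslack T (by simpa [hF] using hT)
  have hδle : ∀ T : Finset V, i ∈ T → δ ≤ f T - ∑ l ∈ T, rs l := fun T hiT =>
    Finset.min'_le _ _ (Finset.mem_image_of_mem _ (by simp [hF, hiT]))
  set ε := min δ (M * D i - rs i) with hε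
  have hεpos : 0 < ε := lt_min hδpos (by linarith [hM i])
  set r' := fun l => rs l + (if l = i then ε else 0) with hr'
  have hr'A : r' ∈ polyA f := by
    constructor
    · intro l
      have := hrs.1 l
      rw [hr']; dsimp only; split <;> linarith
    · intro T
      rw [hr', sum_shift]
      split
      · rename_i hiT
        have h1 := hδle T hiT
        have h2 : ε ≤ δ := min_le_left _ _
        linarith
      · simpa using hrs.2 T
  have hΦ : (∑ l, (r' l - M * D l)^2 / D l) < ∑ l, (rs l - M * D l)^2 / D l := by
    have hdiff : ∑ l, ((r' l - M * D l)^2 / D l - (rs l - M * D l)^2 / D l)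
        = ((rs i + ε - M * D i)^2 - (rs i - M * D i)^2) / D i := by
      rw [sum_diff_single i]
      · rw [hr']; simp [div_sub_div_same]
      · intro l hl
        rw [hr']; simp [hl]
    have hneg : ((rs i + ε - M * D i)^2 - (rs i - M * D i)^2) / D i < 0 := by
      apply div_neg_of_neg_of_pos _ (hD i)
      have h2 : ε ≤ M * D i - rs i := min_le_right _ _
      nlinarith [hεpos]
    rw [Finset.sum_sub_distrib] at hdiff
    linarith
  exact absurd (hmin hr'A) (by simpa using not_le.2 hΦ)


private lemma sum_shift2 (T : Finset V) (rs : V → ℝ) (i j : V) (ε : ℝ) :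
    ∑ l ∈ T, (rs l + (if l = i then ε else 0) - (if l = j then ε else 0))
      = ∑ l ∈ T, rs l + (if i ∈ T then ε else 0) - (if j ∈ T then ε else 0) := by
  rw [Finset.sum_sub_distrib, Finset.sum_add_distrib, Finset.sum_ite_eq' T i (fun _ => ε),
    Finset.sum_ite_eq' T j (fun _ => ε)]

private lemma sum_diff_pair (i j : V) (hij : i ≠ j) (g : V → ℝ)
    (h : ∀ l, l ≠ i → l ≠ j → g l = 0) :
    ∑ l, g l = g i + g j := by
  have hz : ∀ x ∈ (Finset.univ : Finset V), x ∉ ({i, j} : Finset V) → g x = 0 := by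
    intro x _ hx
    simp only [Finset.mem_insert, Finset.mem_singleton] at hx
    push_neg at hx
    exact h x hx.1 hx.2
  rw [← Finset.sum_subset (Finset.subset_univ {i, j}) hz]
  exact Finset.sum_pair hij

/-- The exchange lemma: at the minimizer, if `ρ i < ρ j` there is a tight set
separating `i` from `j`. -/
private lemma exists_tight_sep {f : Finset V → ℝ} {D : V → ℝ} (hD : ∀ i, 0 < D i)
    {M : ℝ} {rs : V → ℝ} (hrs : rs ∈ polyA f)
    (hmin : IsMinOn (fun r => ∑ l, (r l - M * D l)^2 / D l) (polyA f) rs) {i j : V}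
    (hij : rs i / D i < rs j / D j) :
    ∃ T : Finset V, i ∈ T ∧ j ∉ T ∧ Tight f rs T := by
  have hne : i ≠ j := by rintro rfl; exact lt_irrefl _ hij
  have hrj : 0 < rs j := by
    have h1 : 0 ≤ rs i / D i := div_nonneg (hrs.1 i) (hD i).le
    have h2 : 0 < rs j / D j := lt_of_le_of_lt h1 hij
    have he : rs j = rs j / D j * D j := (div_mul_cancel₀ _ (hD j).ne').symm
    rw [he]; exact mul_pos h2 (hD j)
  by_contra hcon
  push_neg at hcon
  have hslack : ∀ T : Finset V, i ∈ T → j ∉ T → 0 < f T - ∑ l ∈ T, rs l := by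
    intro T hiT hjT
    have h1 := hrs.2 T
    have hne2 := hcon T hiT hjT
    unfold Tight at hne2
    rcases lt_or_eq_of_le h1 with h | h
    · linarith
    · exact absurd h hne2
  set F : Finset (Finset V) := Finset.univ.filter (fun T => i ∈ T ∧ j ∉ T) with hF
  have hFne : F.Nonempty := ⟨{i}, by simp [hF, Ne.symm hne]⟩
  have himgne : (F.image (fun T => f T - ∑ l ∈ T, rs l)).Nonempty := hFne.image _
  set δ := (F.image (fun T => f T - ∑ l ∈ T, rs l)).min' himgne with hδ
  have hδpos : 0 < δ := by
    obtain ⟨T, hT, hTe⟩ := Finset.mem_image.1 ((F.image _).min'_mem himgne)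
    rw [hδ, ← hTe]
    simp only [hF, Finset.mem_filter] at hT
    exact hslack T hT.2.1 hT.2.2
  have hδle : ∀ T : Finset V, i ∈ T → j ∉ T → δ ≤ f T - ∑ l ∈ T, rs l := fun T h1 h2 =>
    Finset.min'_le _ _ (Finset.mem_image_of_mem _ (by simp [hF, h1, h2]))
  set γ := (rs j / D j - rs i / D i) / (1 / D i + 1 / D j) with hγ
  have hsumpos : 0 < 1 / D i + 1 / D j :=
    add_pos (one_div_pos.mpr (hD i)) (one_div_pos.mpr (hD j))
  have hγpos : 0 < γ := div_pos (by linarith) hsumpos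
  set ε := min (min δ (rs j)) γ with hε
  have hεpos : 0 < ε := lt_min (lt_min hδpos hrj) hγpos
  have hεδ : ε ≤ δ := le_trans (min_le_left _ _) (min_le_left _ _)
  have hεrj : ε ≤ rs j := le_trans (min_le_left _ _) (min_le_right _ _)
  have hεγ : ε ≤ γ := min_le_right _ _
  set r' := fun l => rs l + (if l = i then ε else 0) - (if l = j then ε else 0) with hr'
  have hr'A : r' ∈ polyA f := by
    constructor
    · intro l
      have h0 := hrs.1 l
      rw [hr']; dsimp only
      by_cases h2 : l = j
      · subst h2
        rw [if_neg (Ne.symm hne), if_pos rfl]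
        linarith
      · simp only [if_neg h2]
        split <;> linarith
    · intro T
      rw [hr', sum_shift2]
      by_cases hiT : i ∈ T <;> by_cases hjT : j ∈ T <;> simp [hiT, hjT]
      · linarith [hrs.2 T]
      · have := hδle T hiT hjT; linarith
      · linarith [hrs.2 T, hεpos]
      · linarith [hrs.2 T]
  have hΦ : (∑ l, (r' l - M * D l)^2 / D l) < ∑ l, (rs l - M * D l)^2 / D l := by
    have hdiff : ∑ l, ((r' l - M * D l)^2 / D l - (rs l - M * D l)^2 / D l)
        = ((rs i + ε - M * D i)^2 - (rs i - M * D i)^2) / D i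
          + ((rs j - ε - M * D j)^2 - (rs j - M * D j)^2) / D j := by
      rw [sum_diff_pair i j hne]
      · rw [hr']; simp [hne, Ne.symm hne, div_sub_div_same]
      · intro l h1 h2
        rw [hr']; simp [h1, h2]
    have hneg : ((rs i + ε - M * D i)^2 - (rs i - M * D i)^2) / D i
          + ((rs j - ε - M * D j)^2 - (rs j - M * D j)^2) / D j < 0 := by
      have hDi := hD i
      have hDj := hD j
      have e1 : ((rs i + ε - M * D i)^2 - (rs i - M * D i)^2) / D i
          = 2 * ε * (rs i / D i - M) + ε^2 / D i := by field_simp; ring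
      have e2 : ((rs j - ε - M * D j)^2 - (rs j - M * D j)^2) / D j
          = -(2 * ε * (rs j / D j - M)) + ε^2 / D j := by field_simp; ring
      rw [e1, e2]
      have hkey : ε * (1 / D i + 1 / D j) ≤ rs j / D j - rs i / D i := by
        rw [hγ] at hεγ
        calc ε * (1 / D i + 1 / D j) ≤ γ * (1 / D i + 1 / D j) := by
              apply mul_le_mul_of_nonneg_right hεγ hsumpos.le
          _ = rs j / D j - rs i / D i := div_mul_cancel₀ _ hsumpos.ne'
      have hε2 : ε^2 / D i + ε^2 / D j = ε * (ε * (1 / D i + 1 / D j)) := by field_simp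
      nlinarith [mul_le_mul_of_nonneg_left hkey hεpos.le]
    rw [Finset.sum_sub_distrib] at hdiff
    linarith
  exact absurd (hmin hr'A) (by simpa using not_le.2 hΦ)


/-- The chain of level sets of the minimizer is tight. -/
private lemma tight_chain {f : Finset V → ℝ} {D : V → ℝ} (hf0 : f ∅ = 0)
    (hsub : ∀ S T : Finset V, f (S ∩ T) + f (S ∪ T) ≤ f S + f T)
    (hD : ∀ i, 0 < D i)
    {M : ℝ} {rs : V → ℝ} (hrs : rs ∈ polyA f)
    (hM : ∀ i, rs i < M * D i)
    (hmin : IsMinOn (fun r => ∑ l, (r l - M * D l)^2 / D l) (polyA f) rs) (t : ℝ) :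
    Tight f rs (Finset.univ.filter fun i => rs i / D i ≤ t) := by
  set S := Finset.univ.filter (fun i => rs i / D i ≤ t) with hS
  have hTi : ∀ i ∈ S, ∃ T : Finset V, i ∈ T ∧ T ⊆ S ∧ Tight f rs T := by
    intro i hi
    have hit : rs i / D i ≤ t := (Finset.mem_filter.1 hi).2
    obtain ⟨T0, hiT0, hT0⟩ := exists_tight_mem (V := V) hD hrs hM hmin i
    have hsep : ∀ j, j ∉ S → ∃ T : Finset V, i ∈ T ∧ j ∉ T ∧ Tight f rs T := by
      intro j hj
      have h2 : ¬ rs j / D j ≤ t := by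
        intro h; exact hj (Finset.mem_filter.2 ⟨Finset.mem_univ j, h⟩)
      push_neg at h2
      exact exists_tight_sep (V := V) hD hrs hmin (lt_of_le_of_lt hit h2)
    classical
    set g : V → Finset V := fun j => if h : j ∉ S then (hsep j h).choose else Finset.univ
      with hg
    have hgt : ∀ j ∈ Sᶜ, Tight f rs (g j) := by
      intro j hj
      rw [Finset.mem_compl] at hj
      rw [hg]; simp only [dif_pos hj]
      exact (hsep j hj).choose_spec.2.2
    have hgi : ∀ j, i ∈ g j := by
      intro j
      rw [hg]; dsimp only
      split
      · exact (hsep j ‹_›).choose_spec.1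
      · exact Finset.mem_univ i
    have hgj : ∀ j ∈ Sᶜ, j ∉ g j := by
      intro j hj
      rw [Finset.mem_compl] at hj
      rw [hg]; simp only [dif_pos hj]
      exact (hsep j hj).choose_spec.2.1
    refine ⟨T0 ∩ Sᶜ.inf g, ?_, ?_, tight_inf hsub hrs T0 hT0 Sᶜ g hgt⟩
    · exact Finset.mem_inter.2 ⟨hiT0, Finset.mem_inf.2 fun j _ => hgi j⟩
    · intro x hx
      by_contra hxS
      have hxc : x ∈ Sᶜ := Finset.mem_compl.2 hxS
      have h1 : x ∈ Sᶜ.inf g := (Finset.mem_inter.1 hx).2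
      exact hgj x hxc (Finset.mem_inf.1 h1 x hxc)
  classical
  set Tf : V → Finset V := fun i => if h : i ∈ S then (hTi i h).choose else ∅ with hTf
  have hTft : ∀ i ∈ S, Tight f rs (Tf i) := by
    intro i hi
    rw [hTf]; simp only [dif_pos hi]
    exact (hTi i hi).choose_spec.2.2
  have hsupS : S.sup Tf = S := by
    apply Finset.Subset.antisymm
    · have hle : S.sup Tf ≤ S := by
        apply Finset.sup_le
        intro i hi
        rw [hTf]; simp only [dif_pos hi]
        exact Finset.le_iff_subset.mpr (hTi i hi).choose_spec.2.1
      exact Finset.le_iff_subset.mp hle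
    · intro i hi
      apply Finset.mem_of_subset (Finset.le_sup hi)
      rw [hTf]; simp only [dif_pos hi]
      exact (hTi i hi).choose_spec.1
  have := tight_sup hf0 hsub hrs S Tf hTft
  rwa [hsupS] at this


/-- The main induction: climbing the level sets of the minimizer. -/
private lemma main_step {f : Finset V → ℝ} {D : V → ℝ} (hD : ∀ i, 0 < D i)
    {rs w : V → ℝ} (hrs : rs ∈ polyA f) (hw : w ∈ polyA f)
    (htight : ∀ t : ℝ, Tight f rs (Finset.univ.filter fun i => rs i / D i ≤ t)) :
    ∀ n (S : Finset V), Sᶜ.card ≤ n →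
      (∀ i ∈ S, ∀ j, j ∉ S → rs i / D i < rs j / D j) →
      (∀ i ∈ S, w i = rs i) →
      (∀ i ∈ S, ∀ j, j ∉ S → rs i / D i < w j / D j) →
      (∀ i, w i = rs i) ∨
        (∃ k : ℕ, (∀ j' < k, (sortedVec (fun i => rs i / D i)).getD j' 0
            = (sortedVec (fun i => w i / D i)).getD j' 0) ∧
          (sortedVec (fun i => w i / D i)).getD k 0
            < (sortedVec (fun i => rs i / D i)).getD k 0) := by
  intro n
  induction n with
  | zero =>
    intro S hcard _ heq _
    left
    have h0 : Sᶜ = ∅ := Finset.card_eq_zero.1 (le_antisymm hcard (Nat.zero_le _))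
    have hSuniv : S = Finset.univ := by
      rwa [Finset.compl_eq_empty_iff] at h0
    intro i; exact heq i (hSuniv ▸ Finset.mem_univ i)
  | succ n ih =>
    intro S hcard hcut heq hlt2
    by_cases hSc : Sᶜ = ∅
    · left
      have hSuniv : S = Finset.univ := by rwa [Finset.compl_eq_empty_iff] at hSc
      intro i; exact heq i (hSuniv ▸ Finset.mem_univ i)
    have hScne : Sᶜ.Nonempty := Finset.nonempty_of_ne_empty hSc
    have himgne : (Sᶜ.image (fun i => rs i / D i)).Nonempty := hScne.image _
    set t := (Sᶜ.image (fun i => rs i / D i)).min' himgne with ht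
    obtain ⟨j₁, hj₁c, hj₁⟩ := Finset.mem_image.1 ((Sᶜ.image _).min'_mem himgne)
    have htmin : ∀ j ∈ Sᶜ, t ≤ rs j / D j := fun j hj =>
      Finset.min'_le _ _ (Finset.mem_image_of_mem _ hj)
    set L := Sᶜ.filter (fun j => rs j / D j = t) with hL
    set S' := S ∪ L with hS'
    have hj₁L : j₁ ∈ L := Finset.mem_filter.2 ⟨hj₁c, hj₁⟩
    have hLS : ∀ j ∈ L, j ∉ S := fun j hj => Finset.mem_compl.1 (Finset.mem_filter.1 hj).1
    have hdisj : Disjoint S L := by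
      rw [Finset.disjoint_right]; exact fun j hj => hLS j hj
    have hmemS' : ∀ {x}, x ∈ S' → x ∈ S ∨ (x ∉ S ∧ rs x / D x = t) := by
      intro x hx
      rcases Finset.mem_union.1 hx with h | h
      · exact Or.inl h
      · exact Or.inr ⟨hLS x h, (Finset.mem_filter.1 h).2⟩
    have hρS : ∀ i ∈ S, rs i / D i < t := fun i hi => hcut i hi j₁ (Finset.mem_compl.1 hj₁c) |>.trans_eq hj₁
    have hρS'le : ∀ i ∈ S', rs i / D i ≤ t := by
      intro i hi
      rcases hmemS' hi with h | h
      · exact (hρS i h).le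
      · exact h.2.le
    have hρout : ∀ j, j ∉ S' → t < rs j / D j := by
      intro j hj
      have hjS : j ∉ S := fun h => hj (Finset.mem_union_left _ h)
      have h1 := htmin j (Finset.mem_compl.2 hjS)
      rcases lt_or_eq_of_le h1 with h | h
      · exact h
      · exact absurd (Finset.mem_union_right _ (Finset.mem_filter.2 ⟨Finset.mem_compl.2 hjS, h.symm⟩)) hj
    have hS'form : S' = Finset.univ.filter (fun i => rs i / D i ≤ t) := by
      ext i
      simp only [Finset.mem_filter, Finset.mem_univ, true_and]
      constructor
      · exact hρS'le i
      · intro hile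
        by_contra hiS'
        exact absurd hile (not_le.2 (hρout i hiS'))
    -- sums
    have hsum_S : ∑ i ∈ S, w i = ∑ i ∈ S, rs i := Finset.sum_congr rfl heq
    have htS' : ∑ i ∈ S', rs i = f S' := by
      have := htight t; rw [← hS'form] at this; exact this
    have hwS' : ∑ i ∈ S', w i ≤ f S' := hw.2 S'
    have hsplit : ∀ x : V → ℝ, ∑ i ∈ S', x i = ∑ i ∈ S, x i + ∑ i ∈ L, x i := by
      intro x; rw [hS', Finset.sum_union hdisj]
    have hLsum : ∑ i ∈ L, w i ≤ ∑ i ∈ L, rs i := by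
      have h1 := hsplit w
      have h2 := hsplit rs
      linarith [htS' ▸ hwS']
    by_cases hcaseA : ∃ j, j ∉ S ∧ w j / D j < t
    · -- strict win at |S|
      right
      obtain ⟨jw, hjwS, hjwlt⟩ := hcaseA
      have himgne2 : (Sᶜ.image (fun i => w i / D i)).Nonempty := hScne.image _
      obtain ⟨j₀, hj₀c, hj₀⟩ := Finset.mem_image.1 ((Sᶜ.image _).min'_mem himgne2)
      have hj₀min : ∀ j ∈ Sᶜ, w j₀ / D j₀ ≤ w j / D j := by
        intro j hj
        rw [hj₀]
        exact Finset.min'_le _ _ (Finset.mem_image_of_mem _ hj)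
      have hj₀lt : w j₀ / D j₀ < t :=
        lt_of_le_of_lt (hj₀min jw (Finset.mem_compl.2 hjwS)) hjwlt
      apply lex_win (V := V) (fun i => rs i / D i) (fun i => w i / D i) S
      · intro i hi; rw [heq i hi]
      · intro i hi j hj; exact (hcut i hi j hj).le
      · intro i hi j hj; exact (hlt2 i hi j hj).le
      · exact Finset.mem_compl.1 hj₀c
      · intro j hj
        exact lt_of_lt_of_le hj₀lt (htmin j (Finset.mem_compl.2 hj))
      · intro j hj; exact hj₀min j (Finset.mem_compl.2 hj)
    push_neg at hcaseA
    -- case B : all ratios of w outside S are ≥ t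
    have hwL : ∀ i ∈ L, w i = rs i := by
      have hterm : ∀ i ∈ L, 0 ≤ w i - rs i := by
        intro i hi
        have h1 : rs i / D i = t := (Finset.mem_filter.1 hi).2
        have h2 : t ≤ w i / D i := hcaseA i (hLS i hi)
        have h3 : rs i / D i ≤ w i / D i := h1 ▸ h2
        have := (div_le_div_iff_of_pos_right (hD i)).1 h3
        linarith [this]
      have hsum0 : ∑ i ∈ L, (w i - rs i) = 0 := by
        rw [Finset.sum_sub_distrib]
        have h1 : 0 ≤ ∑ i ∈ L, (w i - rs i) := Finset.sum_nonneg hterm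
        rw [Finset.sum_sub_distrib] at h1
        linarith
      intro i hi
      have := (Finset.sum_eq_zero_iff_of_nonneg hterm).1 hsum0 i hi
      linarith [this]
    have heq' : ∀ i ∈ S', w i = rs i := by
      intro i hi
      rcases Finset.mem_union.1 hi with h | h
      · exact heq i h
      · exact hwL i h
    by_cases hcaseB1 : ∃ j, j ∉ S' ∧ w j / D j ≤ t
    · right
      obtain ⟨j₀, hj₀S', hj₀le⟩ := hcaseB1
      have hj₀S : j₀ ∉ S := fun h => hj₀S' (Finset.mem_union_left _ h)
      have hj₀eq : w j₀ / D j₀ = t := le_antisymm hj₀le (hcaseA j₀ hj₀S)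
      apply lex_win (V := V) (fun i => rs i / D i) (fun i => w i / D i) S'
      · intro i hi; rw [heq' i hi]
      · intro i hi j hj; exact le_of_lt (lt_of_le_of_lt (hρS'le i hi) (hρout j hj))
      · intro i hi j hj
        have hjS : j ∉ S := fun h => hj (Finset.mem_union_left _ h)
        exact le_trans (hρS'le i hi) (hcaseA j hjS)
      · exact hj₀S'
      · intro j hj; rw [hj₀eq]; exact hρout j hj
      · intro j hj
        rw [hj₀eq]
        have hjS : j ∉ S := fun h => hj (Finset.mem_union_left _ h)
        exact hcaseA j hjS
    push_neg at hcaseB1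
    -- case B2 : recurse
    have hcard' : S'ᶜ.card ≤ n := by
      have hss : S'ᶜ ⊂ Sᶜ := by
        constructor
        · intro x hx
          rw [Finset.mem_compl] at hx ⊢
          exact fun h => hx (Finset.mem_union_left _ h)
        · intro hsub2
          have := hsub2 (Finset.mem_compl.2 (hLS j₁ hj₁L))
          rw [Finset.mem_compl] at this
          exact this (Finset.mem_union_right _ hj₁L)
      have := Finset.card_lt_card hss
      omega
    refine ih S' hcard' ?_ heq' ?_
    · intro i hi j hj
      exact lt_of_le_of_lt (hρS'le i hi) (hρout j hj)
    · intro i hi j hj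
      exact lt_of_le_of_lt (hρS'le i hi) (hcaseB1 j hj)


private lemma polyA_zero_mem {f : Finset V → ℝ} (hf0 : f ∅ = 0)
    (hmono : ∀ S T : Finset V, S ⊆ T → f S ≤ f T) : (0 : V → ℝ) ∈ polyA f := by
  refine ⟨fun i => le_refl 0, fun S => ?_⟩
  simpa using hf0 ▸ hmono ∅ S (Finset.empty_subset S)

private lemma polyA_bound {f : Finset V → ℝ}
    (hmono : ∀ S T : Finset V, S ⊆ T → f S ≤ f T)
    {r : V → ℝ} (hr : r ∈ polyA f) (i : V) : r i ≤ f Finset.univ := by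
  have h1 : r i ≤ f {i} := by simpa using hr.2 {i}
  exact h1.trans (hmono {i} Finset.univ (Finset.subset_univ _))

private lemma polyA_isCompact {f : Finset V → ℝ} (hf0 : f ∅ = 0)
    (hmono : ∀ S T : Finset V, S ⊆ T → f S ≤ f T) : IsCompact (polyA f) := by
  apply IsCompact.of_isClosed_subset
    (isCompact_univ_pi (fun i : V => isCompact_Icc (a := (0:ℝ)) (b := f Finset.univ)))
  · have h1 : IsClosed (⋂ i : V, {r : V → ℝ | 0 ≤ r i}) :=
      isClosed_iInter fun i => isClosed_le continuous_const (continuous_apply i)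
    have h2 : IsClosed (⋂ S : Finset V, {r : V → ℝ | ∑ i ∈ S, r i ≤ f S}) :=
      isClosed_iInter fun S => isClosed_le
        (continuous_finset_sum _ fun i _ => continuous_apply i) continuous_const
    have : polyA f = (⋂ i : V, {r : V → ℝ | 0 ≤ r i}) ∩
        (⋂ S : Finset V, {r : V → ℝ | ∑ i ∈ S, r i ≤ f S}) := by
      ext r; simp [polyA, Set.mem_iInter]
    rw [this]
    exact h1.inter h2
  · intro r hr
    rw [Set.mem_univ_pi]
    intro i
    exact ⟨hr.1 i, polyA_bound hmono hr i⟩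

private lemma exists_min {f : Finset V → ℝ} (hf0 : f ∅ = 0)
    (hmono : ∀ S T : Finset V, S ⊆ T → f S ≤ f T) (D : V → ℝ) (hD : ∀ i, 0 < D i) (M : ℝ) :
    ∃ rs ∈ polyA f, IsMinOn (fun r => ∑ l, (r l - M * D l)^2 / D l) (polyA f) rs := by
  apply IsCompact.exists_isMinOn (polyA_isCompact hf0 hmono)
    ⟨0, polyA_zero_mem hf0 hmono⟩
  apply Continuous.continuousOn
  apply continuous_finset_sum
  intro i _
  exact (((continuous_apply i).sub continuous_const).pow 2).div_const _

private lemma asymm {a b : List ℝ}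
    (hwin : ∃ k : ℕ, (∀ j < k, a.getD j 0 = b.getD j 0) ∧ b.getD k 0 < a.getD k 0)
    (hge : b = a ∨ ∃ k : ℕ, (∀ j < k, b.getD j 0 = a.getD j 0) ∧ a.getD k 0 < b.getD k 0) :
    False := by
  obtain ⟨k, hpre, hlt⟩ := hwin
  rcases hge with h | ⟨k', hpre', hlt'⟩
  · rw [h] at hlt; exact lt_irrefl _ hlt
  · rcases lt_trichotomy k k' with h | h | h
    · have h2 := hpre' k h; rw [h2] at hlt; exact lt_irrefl _ hlt
    · subst h; exact absurd hlt (not_lt.2 hlt'.le)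
    · have h2 := hpre k' h; rw [h2] at hlt'; exact lt_irrefl _ hlt'

private lemma M_bound {f : Finset V → ℝ}
    (hf0 : f ∅ = 0) (hmono : ∀ S T : Finset V, S ⊆ T → f S ≤ f T)
    (D : V → ℝ) (hD : ∀ i, 0 < D i) {rs : V → ℝ} (hrs : rs ∈ polyA f) (i : V) :
    rs i < (1 + ∑ l, f Finset.univ / D l) * D i := by
  have hfnn : 0 ≤ f Finset.univ := hf0 ▸ hmono ∅ Finset.univ (Finset.empty_subset _)
  have h1 : rs i ≤ f Finset.univ := polyA_bound hmono hrs i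
  have h2 : f Finset.univ / D i ≤ ∑ l, f Finset.univ / D l :=
    Finset.single_le_sum (fun l _ => div_nonneg hfnn (hD l).le) (Finset.mem_univ i)
  have h3 : f Finset.univ = (f Finset.univ / D i) * D i := (div_mul_cancel₀ _ (hD i).ne').symm
  have h4 : (f Finset.univ / D i) * D i ≤ (∑ l, f Finset.univ / D l) * D i :=
    mul_le_mul_of_nonneg_right h2 (hD i).le
  nlinarith [hD i]


end Aux

/-- in the polymatroid polyhedron `A` there exists a lexicographically
optimal vector, and it is unique. -/
theorem lexopt_exists_unique {V : Type*} [Fintype V] [DecidableEq V]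
    (f : Finset V → ℝ) (hf0 : f ∅ = 0)
    (hmono : ∀ S T : Finset V, S ⊆ T → f S ≤ f T)
    (hsub : ∀ S T : Finset V, f (S ∩ T) + f (S ∪ T) ≤ f S + f T)
    (D : V → ℝ) (hD : ∀ i, 0 < D i) :
    ∃! r : V → ℝ, LexOptimal (polyA f) D r := by
  classical
  set M := 1 + ∑ l, f Finset.univ / D l with hM
  obtain ⟨rs, hrsA, hmin⟩ := exists_min hf0 hmono D hD M
  have hMb : ∀ i, rs i < M * D i := fun i => M_bound hf0 hmono D hD hrsA i
  have htight : ∀ t : ℝ, Tight f rs (Finset.univ.filter fun i => rs i / D i ≤ t) :=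
    fun t => tight_chain hf0 hsub hD hrsA hMb hmin t
  have hmain : ∀ w ∈ polyA f, (∀ i, w i = rs i) ∨
      (∃ k : ℕ, (∀ j' < k, (sortedVec (fun i => rs i / D i)).getD j' 0
          = (sortedVec (fun i => w i / D i)).getD j' 0) ∧
        (sortedVec (fun i => w i / D i)).getD k 0
          < (sortedVec (fun i => rs i / D i)).getD k 0) := by
    intro w hw
    exact main_step hD hrsA hw htight (Fintype.card V) ∅
      (by simp) (by simp) (by simp) (by simp)
  refine ⟨rs, ⟨hrsA, ?_⟩, ?_⟩
  · intro w hw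
    rcases hmain w hw with h | h
    · left
      have heqfun : (fun i => w i / D i) = (fun i => rs i / D i) :=
        funext fun i => by rw [h i]
      rw [heqfun]
    · right; exact h
  · intro w hwopt
    rcases hmain w hwopt.1 with h | h
    · funext i; exact h i
    · exfalso
      have hge := hwopt.2 rs hrsA
      exact asymm h hge

end SharingEcon
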